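/- For every Ẽ < 0 there exists a constant C_Ẽ (independent of Λ, ω and I) such that for every finite box Λ ⊂ ℤ^d and every interval I ⊂ (−∞, Ẽ], tr E_{H_{ω,Λ}}(I) ≤ C_Ẽ · tr( χ_{Γ∩Λ} E_{H_{ω,Λ}}(I) ), where E_{H_{ω,Λ}}(I) is the spectral projection of the Hermitian matrix H_{ω,Λ} onto I and χ_{Γ∩Λ} is the coordinate projection onto the sites of Λ lying in Γ. -/

import Mathlib

open MeasureTheory ENNReal Filter

noncomputable section

/-- Sites of the lattice `ℤ^d`. -/
abbrev Site (d : ℕ) := Fin d → ℤ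

/-- `n ∈ Γ = M ℤ^d`. -/
def inGamma (M : ℕ) {d : ℕ} (n : Site d) : Prop := ∀ i, (M : ℤ) ∣ n i

instance {M d : ℕ} : DecidablePred (inGamma M (d := d)) := fun _ =>
  Fintype.decidableForallFintype

/-- ℓ¹ (graph) distance on `ℤ^d`. -/
def dist1 {d : ℕ} (x y : Site d) : ℤ := ∑ i, |x i - y i|

/-- The sporadic random potential: `V_ω(n) = ω n` for `n ∈ Γ`, `0` otherwise. -/
def sporadicV (M : ℕ) {d : ℕ} (ω : Site d → ℝ) (n : Site d) : ℝ :=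
  if inGamma M n then ω n else 0

/-- The matrix of `H_ω = H_0 + λ V_ω` restricted to a finite set `Λ ⊂ ℤ^d`:
`H_{ω,Λ} = χ_Λ H_ω χ_Λ`. -/
def HBox {d : ℕ} (M : ℕ) (lam : ℝ) (ω : Site d → ℝ) (Λ : Finset (Site d)) :
    Matrix Λ Λ ℝ := fun x y =>
  if (x : Site d) = (y : Site d) then 2 * d + lam * sporadicV M ω x
  else if dist1 (x : Site d) (y : Site d) = 1 then -1 else 0

lemma HBox_isHermitian {d : ℕ} (M : ℕ) (lam : ℝ) (ω : Site d → ℝ) (Λ : Finset (Site d)) :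
    (HBox M lam ω Λ).IsHermitian := by
  ext x y
  simp only [HBox, Matrix.conjTranspose_apply, star_trivial]
  have h1 : ((y : Site d) = (x : Site d)) ↔ ((x : Site d) = (y : Site d)) := eq_comm
  have h2 : dist1 (y : Site d) (x : Site d) = dist1 (x : Site d) (y : Site d) := by
    unfold dist1; exact Finset.sum_congr rfl fun i _ => abs_sub_comm _ _
  by_cases h : (x : Site d) = (y : Site d)
  · simp [h, Subtype.ext h]
  · have h' : ¬((y : Site d) = (x : Site d)) := fun hh => h hh.symm
    simp [h, h', h2]

/-- The number of eigenvalues (counted with multiplicity) of a matrix in a set `I ⊆ ℝ`;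
for a Hermitian matrix this is `tr E_A(I)`. -/
def eigCount {n : Type*} [Fintype n] [DecidableEq n] (A : Matrix n n ℝ) (I : Set ℝ) : ℕ := by
  classical exact (A.charpoly.roots.filter (· ∈ I)).card

/-- The cube `Λ_L` of side length `L` centered at `0`: the points `x` with
`-L/2 < x ν ≤ L/2`; it contains `L^d` points. -/
def cube (d L : ℕ) : Finset (Site d) :=
  Finset.Icc (fun _ => (L : ℤ) / 2 - L + 1) (fun _ => (L : ℤ) / 2)

/-- `ℙ` makes the coordinates `(ω n)` i.i.d. with common distribution `μ`. -/
def IsIIDwith {d : ℕ} (ℙ : Measure (Site d → ℝ)) (μ : Measure ℝ) : Prop :=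
  IsProbabilityMeasure ℙ ∧
    ProbabilityTheory.iIndepFun (fun n ω => ω n) ℙ ∧
    ∀ n : Site d, ℙ.map (fun ω => ω n) = μ

/-- The standing assumptions on the single–site distribution `μ`: it is a probability
measure with a bounded density and compact support, its support contains more than one
point, and `inf supp μ < 0`. -/
structure GoodMeasure (μ : Measure ℝ) : Prop where
  prob : IsProbabilityMeasure μ
  boundedDensity : ∃ ρ : ℝ → ℝ, (∀ x, 0 ≤ ρ x) ∧ (∃ B, ∀ x, ρ x ≤ B) ∧
    μ = volume.withDensity (fun x => ENNReal.ofReal (ρ x))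
  compactSupport : ∃ K : Set ℝ, IsCompact K ∧ μ Kᶜ = 0
  nontrivialSupport : ∃ x y : ℝ, x ≠ y ∧ (∀ ε > 0, 0 < μ (Metric.ball x ε)) ∧
    (∀ ε > 0, 0 < μ (Metric.ball y ε))
  negSupport : ∃ x < (0:ℝ), ∀ ε > 0, 0 < μ (Metric.ball x ε)

end
noncomputable section

open scoped ComplexOrder in
/-- The spectral projection `E_A(I)` of a Hermitian matrix `A` onto a set `I ⊆ ℝ`:
the orthogonal projection onto the span of the eigenvectors with eigenvalue in `I`. -/
def specProj {n : Type*} [Fintype n] [DecidableEq n] {A : Matrix n n ℝ}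
    (hA : A.IsHermitian) (I : Set ℝ) : Matrix n n ℝ := by
  classical exact ∑ i, if hA.eigenvalues i ∈ I then
    Matrix.of (fun j k => hA.eigenvectorBasis i j * hA.eigenvectorBasis i k) else 0

/-- The coordinate projection `χ_{Γ∩Λ}` onto the sites of `Λ` lying in `Γ`. -/
def gammaProj {d : ℕ} (M : ℕ) (Λ : Finset (Site d)) : Matrix Λ Λ ℝ :=
  Matrix.diagonal (fun x => if inGamma M (x : Site d) then 1 else 0)

end
noncomputable section

/-!
Let `ψ` be an eigenvector of `H_{ω,Λ}` with eigenvalue `E ≤ Ẽ < 0`, and split `ψ = φ + χ` with `φ`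
supported off `Γ` and `χ` on `Γ`. The potential vanishes off `Γ`, so `⟨φ, Hφ⟩ = ⟨φ, H₀φ⟩ ≥ 0`,
while `φ` and `χ` are coupled only through the hopping term, whose norm is at most `2d` by the Schur
test. Hence `E‖φ‖² = ⟨φ, Hφ⟩ + ⟨φ, Hχ⟩ ≥ -2d‖φ‖‖χ‖`, which gives `‖ψ‖² ≤ (1 + 4d²/Ẽ²)‖χ‖²`.
Summing this over an orthonormal eigenbasis yields the trace bound with `C = 1 + 4d²/Ẽ²`.
-/

open Matrix Finset

section QuadraticForms

variable {n : Type*} [Fintype n]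

theorem sq_dotProduct_mulVec_le_of_sum_le (A : Matrix n n ℝ) {R : ℝ} (hA : ∀ i j, 0 ≤ A i j)
    (hrow : ∀ i, ∑ j, A i j ≤ R) (hcol : ∀ j, ∑ i, A i j ≤ R) (f g : n → ℝ) :
    (f ⬝ᵥ A *ᵥ g) ^ 2 ≤ R ^ 2 * (f ⬝ᵥ f) * (g ⬝ᵥ g) := by
  have hsqrt : f ⬝ᵥ A *ᵥ g =
      ∑ p : n × n, (√(A p.1 p.2) * f p.1) * (√(A p.1 p.2) * g p.2) := by
    simp only [Fintype.sum_prod_type, dotProduct, mulVec, mul_sum]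
    refine sum_congr rfl fun i _ => sum_congr rfl fun j _ => ?_
    linear_combination -(f i * g j) * Real.mul_self_sqrt (hA i j)
  have hf : ∑ p : n × n, (√(A p.1 p.2) * f p.1) ^ 2 ≤ R * (f ⬝ᵥ f) := by
    simp only [mul_pow, Real.sq_sqrt (hA _ _), Fintype.sum_prod_type, dotProduct, mul_sum]
    refine sum_le_sum fun i _ => ?_
    rw [← sum_mul]
    nlinarith [hrow i, mul_self_nonneg (f i)]
  have hg : ∑ p : n × n, (√(A p.1 p.2) * g p.2) ^ 2 ≤ R * (g ⬝ᵥ g) := by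
    simp only [mul_pow, Real.sq_sqrt (hA _ _), Fintype.sum_prod_type, dotProduct, mul_sum]
    rw [sum_comm]
    refine sum_le_sum fun j _ => ?_
    rw [← sum_mul]
    nlinarith [hcol j, mul_self_nonneg (g j)]
  calc (f ⬝ᵥ A *ᵥ g) ^ 2
      ≤ (∑ p : n × n, (√(A p.1 p.2) * f p.1) ^ 2) * ∑ p : n × n, (√(A p.1 p.2) * g p.2) ^ 2 :=
        hsqrt ▸ sum_mul_sq_le_sq_mul_sq _ _ _
    _ ≤ (R * (f ⬝ᵥ f)) * (R * (g ⬝ᵥ g)) :=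
        mul_le_mul hf hg (sum_nonneg fun _ _ => sq_nonneg _)
          ((sum_nonneg fun _ _ => sq_nonneg _).trans hf)
    _ = R ^ 2 * (f ⬝ᵥ f) * (g ⬝ᵥ g) := by ring

theorem sq_mul_dotProduct_self_le_of_mulVec_eq_smul (A : Matrix n n ℝ) {ψ φ χ : n → ℝ}
    {E K : ℝ} (hψ : A *ᵥ ψ = E • ψ) (hE : E ≤ 0) (hsplit : ψ = φ + χ) (horth : φ ⬝ᵥ χ = 0)
    (hpos : 0 ≤ φ ⬝ᵥ A *ᵥ φ) (hoff : (φ ⬝ᵥ A *ᵥ χ) ^ 2 ≤ K ^ 2 * (φ ⬝ᵥ φ) * (χ ⬝ᵥ χ)) :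
    E ^ 2 * (φ ⬝ᵥ φ) ≤ K ^ 2 * (χ ⬝ᵥ χ) := by
  have hform : E * (φ ⬝ᵥ φ) = φ ⬝ᵥ A *ᵥ φ + φ ⬝ᵥ A *ᵥ χ := by
    rw [← dotProduct_add, ← mulVec_add, ← hsplit, hψ, dotProduct_smul, hsplit, dotProduct_add,
      horth, add_zero, smul_eq_mul]
  have hφ : 0 ≤ φ ⬝ᵥ φ := sum_nonneg fun i _ => mul_self_nonneg (φ i)
  have hχ : 0 ≤ χ ⬝ᵥ χ := sum_nonneg fun i _ => mul_self_nonneg (χ i)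
  have hsq : (E * (φ ⬝ᵥ φ)) ^ 2 ≤ (φ ⬝ᵥ A *ᵥ χ) ^ 2 := by
    rw [← neg_sq (φ ⬝ᵥ A *ᵥ χ)]
    exact sq_le_sq' (by linarith) (by nlinarith)
  rcases hφ.eq_or_lt with h0 | hφpos
  · rw [← h0, mul_zero]; positivity
  · nlinarith

end QuadraticForms

section SpectralProjection

variable {n : Type*} [Fintype n] [DecidableEq n] {A : Matrix n n ℝ}

open Classical in
theorem trace_diagonal_mul_specProj (hA : A.IsHermitian) (I : Set ℝ) (w : n → ℝ) :
    (diagonal w * specProj hA I).trace =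
      ∑ i, if hA.eigenvalues i ∈ I then ∑ j, w j * hA.eigenvectorBasis i j ^ 2 else 0 := by
  simp only [specProj, Matrix.mul_sum, trace_sum]
  refine sum_congr rfl fun i _ => ?_
  split_ifs <;> simp [trace, sq]

open Classical in
theorem trace_specProj (hA : A.IsHermitian) (I : Set ℝ) :
    (specProj hA I).trace =
      ∑ i, if hA.eigenvalues i ∈ I then ∑ j, hA.eigenvectorBasis i j ^ 2 else 0 := by
  simpa using trace_diagonal_mul_specProj hA I 1

end SpectralProjection

section Lattice

variable {d : ℕ}

theorem dist1_comm (x y : Site d) : dist1 x y = dist1 y x := by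
  simp only [dist1, abs_sub_comm]

theorem dist1_self (x : Site d) : dist1 x x = 0 := by
  simp [dist1]

theorem exists_eq_update_of_dist1_eq_one {x y : Site d} (h : dist1 x y = 1) :
    ∃ i : Fin d, ∃ s ∈ ({1, -1} : Finset ℤ), y = Function.update x i (x i + s) := by
  have hnonneg : ∀ j ∈ univ, 0 ≤ |x j - y j| := fun j _ => abs_nonneg _
  obtain ⟨i, hi⟩ : ∃ i, |x i - y i| ≠ 0 := by
    by_contra! hzero
    simp [dist1, hzero] at h
  have hi_le : |x i - y i| ≤ 1 := h ▸ single_le_sum hnonneg (mem_univ i)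
  have hi_eq : |x i - y i| = 1 := by have := abs_nonneg (x i - y i); omega
  have hrest : ∑ j ∈ univ.erase i, |x j - y j| = 0 := by
    have := add_sum_erase univ (fun j => |x j - y j|) (mem_univ i)
    simp only [dist1] at h
    omega
  have hothers : ∀ j ≠ i, y j = x j := fun j hj => by
    have := (sum_eq_zero_iff_of_nonneg fun j _ => abs_nonneg (x j - y j)).1 hrest j
      (mem_erase.2 ⟨hj, mem_univ j⟩)
    rw [abs_eq_zero] at this
    omega
  refine ⟨i, y i - x i, ?_, ?_⟩
  · rw [abs_sub_comm] at hi_eq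
    rcases abs_eq (zero_le_one' ℤ) |>.1 hi_eq with h1 | h1 <;> simp [h1]
  · ext j
    rcases eq_or_ne j i with rfl | hj
    · simp
    · rw [Function.update_of_ne hj, hothers j hj]

theorem card_filter_dist1_eq_one_le (Λ : Finset (Site d)) (x : Site d) :
    #{y : Λ | dist1 x y = 1} ≤ 2 * d := by
  let step : Fin d × ℤ → Site d := fun p => Function.update x p.1 (x p.1 + p.2)
  calc #{y : Λ | dist1 x y = 1}
      ≤ #((univ ×ˢ {1, -1}).image step) := by
        refine card_le_card_of_injOn (↑) (fun y hy => ?_) Subtype.val_injective.injOn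
        obtain ⟨i, s, hs, hy⟩ := exists_eq_update_of_dist1_eq_one (mem_filter.1 hy).2
        exact mem_image.2 ⟨(i, s), mem_product.2 ⟨mem_univ i, hs⟩, hy.symm⟩
    _ ≤ #(univ ×ˢ ({1, -1} : Finset ℤ)) := card_image_le
    _ = 2 * d := by simp [mul_comm]

def latticeAdj (Λ : Finset (Site d)) : Matrix Λ Λ ℝ :=
  of fun x y => if dist1 (x : Site d) y = 1 then 1 else 0

theorem sum_latticeAdj_le {Λ : Finset (Site d)} (x : Λ) : ∑ y, latticeAdj Λ x y ≤ 2 * d := by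
  simp only [latticeAdj, of_apply, sum_boole]
  exact_mod_cast card_filter_dist1_eq_one_le Λ x

theorem sq_dotProduct_latticeAdj_mulVec_le {Λ : Finset (Site d)} (f g : Λ → ℝ) :
    (f ⬝ᵥ latticeAdj Λ *ᵥ g) ^ 2 ≤ (2 * d) ^ 2 * (f ⬝ᵥ f) * (g ⬝ᵥ g) := by
  refine sq_dotProduct_mulVec_le_of_sum_le _ (fun x y => ?_) sum_latticeAdj_le (fun y => ?_) f g
  · simp only [latticeAdj, of_apply]; positivity
  · simpa only [latticeAdj, of_apply, dist1_comm _ (y : Site d)] using sum_latticeAdj_le y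

theorem HBox_eq_diagonal_sub_latticeAdj (M : ℕ) (lam : ℝ) (ω : Site d → ℝ)
    (Λ : Finset (Site d)) :
    HBox M lam ω Λ = diagonal (fun x : Λ => 2 * d + lam * sporadicV M ω x) - latticeAdj Λ := by
  ext x y
  rcases eq_or_ne x y with rfl | hxy
  · simp [HBox, latticeAdj, dist1_self]
  · have hxy' : (x : Site d) ≠ y := fun h => hxy (Subtype.ext h)
    rw [Matrix.sub_apply, diagonal_apply_ne _ hxy]
    simp only [HBox, latticeAdj, of_apply, if_neg hxy']
    split_ifs <;> norm_num

end Lattice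

theorem sum_sq_le_of_HBox_mulVec_eq_smul {d M : ℕ} {lam : ℝ} {ω : Site d → ℝ}
    {Λ : Finset (Site d)} {E c : ℝ} (hEc : E ≤ c) (hc : c < 0) {ψ : Λ → ℝ}
    (hψ : HBox M lam ω Λ *ᵥ ψ = E • ψ) :
    ∑ x, ψ x ^ 2 ≤
      (1 + 4 * d ^ 2 / c ^ 2) * ∑ x : Λ, if inGamma M (x : Site d) then ψ x ^ 2 else 0 := by
  set φ : Λ → ℝ := fun x => if inGamma M (x : Site d) then 0 else ψ x
  set χ : Λ → ℝ := fun x => if inGamma M (x : Site d) then ψ x else 0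
  have hsplit : ψ = φ + χ := by
    ext x; by_cases hx : inGamma M (x : Site d) <;> simp [φ, χ, hx]
  have horth : φ ⬝ᵥ χ = 0 := sum_eq_zero fun x _ => by simp only [φ, χ]; split_ifs <;> simp
  -- `φ` vanishes on `Γ`, the support of the potential, so the diagonal part acts on it as `2d`.
  have hdiag : ∀ u, φ ⬝ᵥ diagonal (fun x : Λ => 2 * d + lam * sporadicV M ω x) *ᵥ u
      = 2 * d * (φ ⬝ᵥ u) := fun u => by
    simp only [dotProduct, mulVec_diagonal, mul_sum]
    refine sum_congr rfl fun x _ => ?_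
    simp only [φ, sporadicV]; split_ifs <;> ring
  have hφ : 0 ≤ φ ⬝ᵥ φ := sum_nonneg fun x _ => mul_self_nonneg (φ x)
  have hpos : 0 ≤ φ ⬝ᵥ HBox M lam ω Λ *ᵥ φ := by
    rw [HBox_eq_diagonal_sub_latticeAdj, sub_mulVec, dotProduct_sub, hdiag]
    have hadj : |φ ⬝ᵥ latticeAdj Λ *ᵥ φ| ≤ 2 * d * (φ ⬝ᵥ φ) :=
      abs_le_of_sq_le_sq (by linarith [sq_dotProduct_latticeAdj_mulVec_le φ φ]) (by positivity)
    linarith [le_abs_self (φ ⬝ᵥ latticeAdj Λ *ᵥ φ)]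
  have hoff : (φ ⬝ᵥ HBox M lam ω Λ *ᵥ χ) ^ 2 ≤ (2 * d) ^ 2 * (φ ⬝ᵥ φ) * (χ ⬝ᵥ χ) := by
    rw [HBox_eq_diagonal_sub_latticeAdj, sub_mulVec, dotProduct_sub, hdiag, horth, mul_zero,
      zero_sub, neg_sq]
    exact sq_dotProduct_latticeAdj_mulVec_le φ χ
  have hloc := sq_mul_dotProduct_self_le_of_mulVec_eq_smul _ hψ (hEc.trans hc.le) hsplit horth
    hpos hoff
  have hφχ : φ ⬝ᵥ φ ≤ 4 * d ^ 2 / c ^ 2 * (χ ⬝ᵥ χ) := by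
    have hcE : c ^ 2 ≤ E ^ 2 := by nlinarith
    rw [div_mul_eq_mul_div, le_div_iff₀ (sq_pos_of_neg hc)]
    nlinarith
  have hψψ : ∑ x, ψ x ^ 2 = φ ⬝ᵥ φ + χ ⬝ᵥ χ := by
    simp only [dotProduct, ← sum_add_distrib]
    refine sum_congr rfl fun x _ => ?_
    simp only [φ, χ]; split_ifs <;> ring
  have hχχ : χ ⬝ᵥ χ = ∑ x : Λ, if inGamma M (x : Site d) then ψ x ^ 2 else 0 :=
    sum_congr rfl fun x _ => by simp only [χ]; split_ifs <;> ring
  rw [hψψ, ← hχχ]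
  linarith

theorem trace_restriction_bound_general
    (d M : ℕ)
    (lam : ℝ)
    (Etil : ℝ) (hEtil : Etil < 0) :
    ∃ C : ℝ, ∀ a b : Site d, ∀ ω : Site d → ℝ, ∀ lo hi : ℝ, hi ≤ Etil →
      (specProj (HBox_isHermitian M lam ω (Finset.Icc a b)) (Set.Icc lo hi)).trace ≤
        C * (gammaProj M (Finset.Icc a b) *
          specProj (HBox_isHermitian M lam ω (Finset.Icc a b)) (Set.Icc lo hi)).trace := by
  refine ⟨1 + 4 * d ^ 2 / Etil ^ 2, fun a b ω lo hi hhi => ?_⟩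
  set hH := HBox_isHermitian M lam ω (Finset.Icc a b)
  rw [trace_specProj, gammaProj, trace_diagonal_mul_specProj, mul_sum]
  refine sum_le_sum fun i _ => ?_
  split_ifs with hi
  · simpa using sum_sq_le_of_HBox_mulVec_eq_smul (hi.2.trans hhi) hEtil
      (hH.mulVec_eigenvectorBasis i)
  · simp

/-- For every `Ẽ < 0` there is a constant `C_Ẽ` (independent of `Λ`, `ω` and `I`)
such that for every finite box `Λ ⊂ ℤ^d` and every interval `I ⊆ (-∞, Ẽ]`,
`tr E_{H_{ω,Λ}}(I) ≤ C_Ẽ · tr (χ_{Γ∩Λ} E_{H_{ω,Λ}}(I))`. -/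
theorem trace_restriction_bound
    (d M : ℕ) (hd : 1 ≤ d) (hM : 2 ≤ M)
    (lam : ℝ) (hlam : 0 < lam)
    (Etil : ℝ) (hEtil : Etil < 0) :
    ∃ C : ℝ, ∀ a b : Site d, ∀ ω : Site d → ℝ, ∀ lo hi : ℝ, hi ≤ Etil →
      (specProj (HBox_isHermitian M lam ω (Finset.Icc a b)) (Set.Icc lo hi)).trace ≤
        C * (gammaProj M (Finset.Icc a b) *
          specProj (HBox_isHermitian M lam ω (Finset.Icc a b)) (Set.Icc lo hi)).trace :=
  trace_restriction_bound_general d M lam Etil hEtil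

end
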